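/- For every n ≥ 1 and every k with 0 ≤ k ≤ n, we have 2^k · #{π : π is a permutation of [n] avoiding both (a-bc) and (a-cb) and 1 + des π = n - k} = C(n,k) · C(n-k,k) · k!, where C denotes the binomial coefficient. (Equivalently, the n-th Eulerian polynomial for {a-bc, a-cb}-avoiding permutations is A_n(x) = Σ_{k=0}^{n} C(n,k) C(n-k,k) (k!/2^k) x^{n-k}.) -/

import Mathlib

/-- `π` avoids the pattern (a-bc). -/
def AvoidsAdBC (n : ℕ) (π : Equiv.Perm (Fin n)) : Prop :=
  ∀ (i j : ℕ) (hi : i < n) (hj : j + 1 < n), i < j →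
    ¬ (π ⟨i, hi⟩ < π ⟨j, Nat.lt_of_succ_lt hj⟩ ∧
       π ⟨j, Nat.lt_of_succ_lt hj⟩ < π ⟨j + 1, hj⟩)

/-- `π` avoids the pattern (a-cb). -/
def AvoidsAdCB (n : ℕ) (π : Equiv.Perm (Fin n)) : Prop :=
  ∀ (i j : ℕ) (hi : i < n) (hj : j + 1 < n), i < j →
    ¬ (π ⟨i, hi⟩ < π ⟨j + 1, hj⟩ ∧
       π ⟨j + 1, hj⟩ < π ⟨j, Nat.lt_of_succ_lt hj⟩)

/-- The number of descents of `π`. -/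
noncomputable def des (n : ℕ) (π : Equiv.Perm (Fin n)) : ℕ :=
  {i : ℕ | ∃ h : i + 1 < n, π ⟨i + 1, h⟩ < π ⟨i, Nat.lt_of_succ_lt h⟩}.ncard

/-!
Both patterns are avoided exactly when no entry lies below both entries of a later adjacent pair.
Write a permutation of `[m + 2]` as the standardization `σ` of its first `m + 1` letters followed
by its last letter `v`: it avoids the patterns iff `σ` does and either `v` is the minimum or `σ`
ends with its minimum. Appending the minimum creates a descent, appending anything else after the
minimum creates an ascent, so the number `a(n, k)` of avoiders of `[n]` with `k` ascents satisfies
`a(n + 2, k + 1) = a(n + 1, k + 1) + (n + 1) a(n, k)`. This is the recurrence of partial matchings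
of `[n]` with `k` edges, which number `n! / (2^k k! (n - 2k)!) = C(n,k) C(n-k,k) k! / 2^k`.
-/

theorem choose_mul_choose_sub_mul_factorial_mul_factorial (n k : ℕ) :
    n.choose k * (n - k).choose k * k.factorial * k.factorial = n.descFactorial (2 * k) := by
  rw [← Nat.descFactorial_mul_descFactorial (show k ≤ 2 * k by omega), show 2 * k - k = k by omega,
    Nat.descFactorial_eq_factorial_mul_choose, Nat.descFactorial_eq_factorial_mul_choose]
  ring

theorem choose_mul_choose_sub_mul_factorial_succ_succ (n k : ℕ) :
    (n + 2).choose (k + 1) * (n + 2 - (k + 1)).choose (k + 1) * (k + 1).factorial =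
      (n + 1).choose (k + 1) * (n + 1 - (k + 1)).choose (k + 1) * (k + 1).factorial +
        2 * (n + 1) * (n.choose k * (n - k).choose k * k.factorial) := by
  apply Nat.eq_of_mul_eq_mul_right (k + 1).factorial_pos
  have hD : (n + 2).descFactorial (2 * (k + 1)) =
      (n + 1).descFactorial (2 * (k + 1)) + 2 * (k + 1) * (n + 1) * n.descFactorial (2 * k) := by
    rw [show 2 * (k + 1) = 2 * k + 1 + 1 by ring, Nat.succ_descFactorial_succ (n + 1),
      Nat.succ_descFactorial_succ n, Nat.succ_descFactorial_succ n, Nat.descFactorial_succ]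
    rcases le_or_gt (2 * k) n with h | h
    · rw [show n + 2 = (n - 2 * k) + 2 * (k + 1) by omega]
      ring
    · rw [Nat.descFactorial_eq_zero_iff_lt.mpr h]
      ring
  rw [add_mul, choose_mul_choose_sub_mul_factorial_mul_factorial,
    choose_mul_choose_sub_mul_factorial_mul_factorial, hD, Nat.factorial_succ,
    ← choose_mul_choose_sub_mul_factorial_mul_factorial n k]
  ring

def AvoidsAdBCAndAdCB (n : ℕ) (π : Equiv.Perm (Fin n)) : Prop :=
  ∀ (i j : ℕ) (hi : i < n) (hj : j + 1 < n), i < j →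
    ¬ (π ⟨i, hi⟩ < π ⟨j, Nat.lt_of_succ_lt hj⟩ ∧ π ⟨i, hi⟩ < π ⟨j + 1, hj⟩)

theorem avoidsAdBC_and_avoidsAdCB_iff {n : ℕ} (π : Equiv.Perm (Fin n)) :
    AvoidsAdBC n π ∧ AvoidsAdCB n π ↔ AvoidsAdBCAndAdCB n π := by
  constructor
  · rintro ⟨hbc, hcb⟩ i j hi hj hij ⟨hb, hc⟩
    have hne : π ⟨j, Nat.lt_of_succ_lt hj⟩ ≠ π ⟨j + 1, hj⟩ := π.injective.ne (by simp)
    rcases lt_or_gt_of_ne hne with h | h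
    · exact hbc i j hi hj hij ⟨hb, h⟩
    · exact hcb i j hi hj hij ⟨hc, h⟩
  · intro h
    exact ⟨fun i j hi hj hij ⟨hb, hc⟩ => h i j hi hj hij ⟨hb, hb.trans hc⟩,
      fun i j hi hj hij ⟨hc, hb⟩ => h i j hi hj hij ⟨hc.trans hb, hc⟩⟩

def IsDescent {n : ℕ} (π : Equiv.Perm (Fin n)) (i : ℕ) : Prop :=
  ∃ h : i + 1 < n, π ⟨i + 1, h⟩ < π ⟨i, Nat.lt_of_succ_lt h⟩

theorem des_eq_ncard_isDescent (n : ℕ) (π : Equiv.Perm (Fin n)) :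
    des n π = {i | IsDescent π i}.ncard := rfl

theorem des_le (m : ℕ) (π : Equiv.Perm (Fin (m + 1))) : des (m + 1) π ≤ m := by
  refine (Set.ncard_le_ncard ?_ (Set.finite_Iio m)).trans_eq (Set.ncard_Iio_nat m)
  exact fun i ⟨h, _⟩ => Nat.lt_of_succ_lt_succ h

section PermSnoc

variable {m : ℕ}

def permSnoc (σ : Equiv.Perm (Fin m)) (v : Fin (m + 1)) : Equiv.Perm (Fin (m + 1)) :=
  finSuccEquivLast.trans (σ.optionCongr.trans (finSuccEquiv' v).symm)

@[simp]
theorem permSnoc_castSucc (σ : Equiv.Perm (Fin m)) (v : Fin (m + 1)) (i : Fin m) :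
    permSnoc σ v i.castSucc = v.succAbove (σ i) := by
  simp [permSnoc]

@[simp]
theorem permSnoc_last (σ : Equiv.Perm (Fin m)) (v : Fin (m + 1)) :
    permSnoc σ v (Fin.last m) = v := by
  simp [permSnoc]

theorem permSnoc_mk_of_lt (σ : Equiv.Perm (Fin m)) (v : Fin (m + 1)) {i : ℕ} (hi : i < m)
    (hi' : i < m + 1) : permSnoc σ v ⟨i, hi'⟩ = v.succAbove (σ ⟨i, hi⟩) :=
  permSnoc_castSucc σ v ⟨i, hi⟩

theorem permSnoc_injective :
    Function.Injective fun p : Equiv.Perm (Fin m) × Fin (m + 1) => permSnoc p.1 p.2 := by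
  rintro ⟨σ, v⟩ ⟨τ, w⟩ h
  have hv : v = w := by simpa using congrArg (· (Fin.last m)) h
  subst hv
  refine Prod.ext (Equiv.ext fun i => ?_) rfl
  simpa using congrArg (· i.castSucc) h

@[simp]
theorem permSnoc_inj {σ τ : Equiv.Perm (Fin m)} {v w : Fin (m + 1)} :
    permSnoc σ v = permSnoc τ w ↔ σ = τ ∧ v = w :=
  permSnoc_injective.eq_iff.trans Prod.mk_inj

theorem permSnoc_surjective :
    Function.Surjective fun p : Equiv.Perm (Fin m) × Fin (m + 1) => permSnoc p.1 p.2 := by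
  refine (Fintype.bijective_iff_injective_and_card _).mpr ⟨permSnoc_injective, ?_⟩ |>.2
  simp [Fintype.card_perm, Nat.factorial_succ, mul_comm]

theorem isDescent_permSnoc_iff (σ : Equiv.Perm (Fin (m + 1))) (v : Fin (m + 2)) (i : ℕ) :
    IsDescent (permSnoc σ v) i ↔ IsDescent σ i ∨ (i = m ∧ v ≤ (σ (Fin.last m)).castSucc) := by
  rcases lt_trichotomy i m with hi | rfl | hi
  · have e := permSnoc_mk_of_lt σ v (show i < m + 1 by omega) (show i < m + 2 by omega)
    have e' := permSnoc_mk_of_lt σ v (show i + 1 < m + 1 by omega) (show i + 1 < m + 2 by omega)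
    constructor
    · rintro ⟨_, h⟩
      rw [e, e', Fin.succAbove_lt_succAbove_iff] at h
      exact Or.inl ⟨by omega, h⟩
    · rintro (⟨_, h⟩ | ⟨rfl, -⟩)
      · exact ⟨by omega, by rwa [e, e', Fin.succAbove_lt_succAbove_iff]⟩
      · omega
  · have e := permSnoc_mk_of_lt σ v (Nat.lt_succ_self i) (show i < i + 2 by omega)
    have e' : permSnoc σ v ⟨i + 1, by omega⟩ = v := permSnoc_last σ v
    constructor
    · rintro ⟨_, h⟩
      rw [e, e'] at h
      exact Or.inr ⟨rfl, (Fin.lt_succAbove_iff_le_castSucc _ _).mp h⟩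
    · rintro (⟨h, -⟩ | ⟨-, h⟩)
      · omega
      · exact ⟨by omega, by rwa [e, e', Fin.lt_succAbove_iff_le_castSucc]⟩
  · constructor
    · rintro ⟨h, -⟩
      omega
    · rintro (⟨h, -⟩ | ⟨rfl, -⟩) <;> omega

theorem des_permSnoc (σ : Equiv.Perm (Fin (m + 1))) (v : Fin (m + 2)) :
    des (m + 2) (permSnoc σ v) =
      des (m + 1) σ + if v ≤ (σ (Fin.last m)).castSucc then 1 else 0 := by
  have hfin : {i | IsDescent σ i}.Finite :=
    (Set.finite_Iio (m + 1)).subset fun i ⟨h, _⟩ => Nat.lt_of_succ_lt h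
  have hm : m ∉ {i | IsDescent σ i} := fun ⟨h, _⟩ => lt_irrefl _ h
  simp only [des_eq_ncard_isDescent, isDescent_permSnoc_iff]
  split_ifs with hc
  · rw [← Set.ncard_insert_of_notMem hm hfin]
    congr 1
    ext i
    simp [hc, or_comm]
  · simp [hc]

theorem permSnoc_mk_lt_permSnoc_mk_iff (σ : Equiv.Perm (Fin (m + 1))) (v : Fin (m + 2))
    {i j : ℕ} (hi : i < m + 1) (hj : j < m + 1) (hi' : i < m + 2) (hj' : j < m + 2) :
    permSnoc σ v ⟨i, hi'⟩ < permSnoc σ v ⟨j, hj'⟩ ↔ σ ⟨i, hi⟩ < σ ⟨j, hj⟩ := by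
  rw [permSnoc_mk_of_lt σ v hi, permSnoc_mk_of_lt σ v hj, Fin.succAbove_lt_succAbove_iff]

theorem avoidsAdBCAndAdCB_permSnoc_iff (σ : Equiv.Perm (Fin (m + 1))) (v : Fin (m + 2)) :
    AvoidsAdBCAndAdCB (m + 2) (permSnoc σ v) ↔
      AvoidsAdBCAndAdCB (m + 1) σ ∧ (v = 0 ∨ σ (Fin.last m) = 0) := by
  have hm : permSnoc σ v ⟨m, by omega⟩ = v.succAbove (σ (Fin.last m)) :=
    permSnoc_castSucc σ v (Fin.last m)
  have hm' : permSnoc σ v ⟨m + 1, by omega⟩ = v := permSnoc_last σ v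
  constructor
  · intro h
    refine ⟨fun i j hi hj hij ⟨hb, hc⟩ => h i j (by omega) (by omega) hij ?_, ?_⟩
    · rwa [permSnoc_mk_lt_permSnoc_mk_iff σ v hi (Nat.lt_of_succ_lt hj),
        permSnoc_mk_lt_permSnoc_mk_iff σ v hi hj, and_iff_right hb]
    by_contra! ⟨hv, hlast⟩
    -- the minimum of `σ` stands before position `m` and below both of the last two entries
    set p := σ.symm 0
    have hp : (p : ℕ) < m := by
      refine lt_of_le_of_ne (Nat.lt_succ_iff.mp p.isLt) fun hpm => hlast ?_
      rw [show Fin.last m = p from Fin.ext hpm.symm, Equiv.apply_symm_apply]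
    have hπp : permSnoc σ v ⟨p, by omega⟩ = 0 := by
      rw [permSnoc_mk_of_lt σ v p.isLt, Fin.eta, Equiv.apply_symm_apply,
        Fin.succAbove_ne_zero_zero hv]
    refine h p m (by omega) (by omega) hp ?_
    rw [hπp, hm, hm', Fin.pos_iff_ne_zero, Fin.pos_iff_ne_zero]
    exact ⟨Fin.succAbove_ne_zero hv hlast, hv⟩
  · rintro ⟨hσ, hv⟩ i j hi hj hij ⟨hb, hc⟩
    rcases Nat.lt_or_ge (j + 1) (m + 1) with hj' | hj'
    · rw [permSnoc_mk_lt_permSnoc_mk_iff σ v (by omega) (by omega)] at hb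
      rw [permSnoc_mk_lt_permSnoc_mk_iff σ v (by omega) hj'] at hc
      exact hσ i j (by omega) hj' hij ⟨hb, hc⟩
    · obtain rfl : j = m := by omega
      by_cases hv0 : v = 0
      · rw [hm', hv0] at hc
        exact Fin.not_lt_zero _ hc
      · rw [hm, hv.resolve_left hv0, Fin.succAbove_ne_zero_zero hv0] at hb
        exact Fin.not_lt_zero _ hb

end PermSnoc

section Avoiders

variable {m : ℕ}

theorem des_permSnoc_zero (σ : Equiv.Perm (Fin (m + 1))) :
    des (m + 2) (permSnoc σ 0) = des (m + 1) σ + 1 := by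
  simp [des_permSnoc]

theorem des_permSnoc_of_last_eq_zero {σ : Equiv.Perm (Fin (m + 1))} {v : Fin (m + 2)}
    (hv : v ≠ 0) (hσ : σ (Fin.last m) = 0) : des (m + 2) (permSnoc σ v) = des (m + 1) σ := by
  simp [des_permSnoc, hσ, hv]

def avoiders (n k : ℕ) : Set (Equiv.Perm (Fin n)) :=
  {π | AvoidsAdBCAndAdCB n π ∧ des n π + k + 1 = n}

theorem permSnoc_zero_mem_avoiders_iff (σ : Equiv.Perm (Fin (m + 1))) (k : ℕ) :
    permSnoc σ 0 ∈ avoiders (m + 2) k ↔ σ ∈ avoiders (m + 1) k := by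
  simp only [avoiders, Set.mem_ofPred_eq, avoidsAdBCAndAdCB_permSnoc_iff, des_permSnoc_zero,
    true_or, and_true]
  exact and_congr_right fun _ => by omega

theorem permSnoc_mem_avoiders_succ_iff {v : Fin (m + 2)} (hv : v ≠ 0)
    (σ : Equiv.Perm (Fin (m + 1))) (k : ℕ) :
    permSnoc σ v ∈ avoiders (m + 2) (k + 1) ↔ σ ∈ avoiders (m + 1) k ∧ σ (Fin.last m) = 0 := by
  simp only [avoiders, Set.mem_ofPred_eq, avoidsAdBCAndAdCB_permSnoc_iff, hv, false_or]
  constructor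
  · rintro ⟨⟨hA, hσ⟩, hd⟩
    rw [des_permSnoc_of_last_eq_zero hv hσ] at hd
    exact ⟨⟨hA, by omega⟩, hσ⟩
  · rintro ⟨⟨hA, hd⟩, hσ⟩
    rw [des_permSnoc_of_last_eq_zero hv hσ]
    exact ⟨⟨hA, hσ⟩, by omega⟩

theorem permSnoc_notMem_avoiders_zero {v : Fin (m + 2)} (hv : v ≠ 0)
    (σ : Equiv.Perm (Fin (m + 1))) : permSnoc σ v ∉ avoiders (m + 2) 0 := by
  rintro ⟨hA, hd⟩
  have hσ := ((avoidsAdBCAndAdCB_permSnoc_iff σ v).mp hA).2.resolve_left hv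
  rw [des_permSnoc_of_last_eq_zero hv hσ] at hd
  have := des_le m σ
  omega

theorem ncard_avoiders_add_two_of_forall_ne_zero {k : ℕ} {E : Set (Equiv.Perm (Fin (m + 1)))}
    (hE : ∀ σ (v : Fin (m + 2)), v ≠ 0 → (permSnoc σ v ∈ avoiders (m + 2) k ↔ σ ∈ E)) :
    (avoiders (m + 2) k).ncard = (avoiders (m + 1) k).ncard + (m + 1) * E.ncard := by
  have hpre : (fun p : Equiv.Perm (Fin (m + 1)) × Fin (m + 2) => permSnoc p.1 p.2) ⁻¹'
      avoiders (m + 2) k = avoiders (m + 1) k ×ˢ {0} ∪ E ×ˢ {0}ᶜ := by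
    ext ⟨σ, v⟩
    by_cases hv : v = 0
    · simp [hv, permSnoc_zero_mem_avoiders_iff]
    · simp [hv, hE σ v hv]
  rw [← Set.ncard_preimage_of_injective_subset_range permSnoc_injective
      (permSnoc_surjective.range_eq ▸ Set.subset_univ _), hpre,
    Set.ncard_union_eq (Set.disjoint_prod.mpr (Or.inr disjoint_compl_right)), Set.ncard_prod,
    Set.ncard_prod, Set.ncard_singleton, Set.ncard_compl, Set.ncard_singleton]
  simp [mul_comm]

end Avoiders

theorem ncard_avoiders_add_two_succ (m k : ℕ) :
    (avoiders (m + 2) (k + 1)).ncard = (avoiders (m + 1) (k + 1)).ncard +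
      (m + 1) * {σ ∈ avoiders (m + 1) k | σ (Fin.last m) = 0}.ncard :=
  ncard_avoiders_add_two_of_forall_ne_zero fun σ _ hv => permSnoc_mem_avoiders_succ_iff hv σ k

theorem ncard_avoiders_add_two_zero (m : ℕ) :
    (avoiders (m + 2) 0).ncard = (avoiders (m + 1) 0).ncard := by
  simpa using ncard_avoiders_add_two_of_forall_ne_zero (E := ∅) fun σ _ hv =>
    iff_of_false (permSnoc_notMem_avoiders_zero hv σ) id

theorem ncard_avoiders_last_eq_zero (m k : ℕ) :
    {π ∈ avoiders (m + 2) k | π (Fin.last (m + 1)) = 0}.ncard = (avoiders (m + 1) k).ncard := by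
  have himage : {π ∈ avoiders (m + 2) k | π (Fin.last (m + 1)) = 0} =
      (permSnoc · 0) '' avoiders (m + 1) k := by
    ext π
    obtain ⟨⟨σ, v⟩, rfl⟩ := permSnoc_surjective π
    simp only [Set.mem_sep_iff, permSnoc_last, Set.mem_image, permSnoc_inj]
    constructor
    · rintro ⟨h, rfl⟩
      exact ⟨σ, (permSnoc_zero_mem_avoiders_iff σ k).mp h, rfl, rfl⟩
    · rintro ⟨τ, hτ, rfl, rfl⟩
      exact ⟨(permSnoc_zero_mem_avoiders_iff τ k).mpr hτ, rfl⟩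
  rw [himage, Set.ncard_image_of_injective _ fun σ τ h => (permSnoc_inj.mp h).1]

theorem avoiders_one_zero : avoiders 1 0 = Set.univ :=
  Set.eq_univ_of_forall fun π => ⟨fun _ _ _ hj => absurd hj (by omega), by simpa using des_le 0 π⟩

theorem avoiders_one_succ (k : ℕ) : avoiders 1 (k + 1) = ∅ :=
  Set.eq_empty_of_forall_notMem fun _ ⟨_, hd⟩ => by omega

theorem two_pow_mul_ncard_avoiders (m k : ℕ) :
    2 ^ k * (avoiders (m + 1) k).ncard = (m + 1).choose k * (m + 1 - k).choose k * k.factorial := by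
  suffices ∀ m, (∀ k, 2 ^ k * (avoiders (m + 1) k).ncard =
      (m + 1).choose k * (m + 1 - k).choose k * k.factorial) ∧
    ∀ k, 2 ^ k * {σ ∈ avoiders (m + 1) k | σ (Fin.last m) = 0}.ncard =
      m.choose k * (m - k).choose k * k.factorial from (this m).1 k
  intro m
  induction m with
  | zero =>
    have hone (k : ℕ) :
        2 ^ k * (avoiders 1 k).ncard = Nat.choose 1 k * (1 - k).choose k * k.factorial := by
      rcases k with _ | k
      · rw [avoiders_one_zero, Set.ncard_univ, Nat.card_eq_fintype_card, Fintype.card_perm]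
        rfl
      · simp [avoiders_one_succ]
    have hlast (k : ℕ) : {σ ∈ avoiders 1 k | σ (Fin.last 0) = 0} = avoiders 1 k :=
      Set.sep_eq_self_iff_mem_true.mpr fun σ _ => Subsingleton.elim _ _
    refine ⟨hone, fun k => ?_⟩
    rw [hlast, hone]
    rcases k with _ | k <;> simp
  | succ m ih =>
    refine ⟨fun k => ?_, fun k => by rw [ncard_avoiders_last_eq_zero, ih.1]⟩
    rcases k with _ | k
    · simpa [ncard_avoiders_add_two_zero] using ih.1 0
    · rw [ncard_avoiders_add_two_succ, choose_mul_choose_sub_mul_factorial_succ_succ, ← ih.1,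
        ← ih.2]
      ring

theorem eulerian_poly_coeff_general (n k : ℕ) (hn : 1 ≤ n) :
    2 ^ k * {π : Equiv.Perm (Fin n) |
        AvoidsAdBC n π ∧ AvoidsAdCB n π ∧ 1 + des n π = n - k}.ncard =
      n.choose k * (n - k).choose k * k.factorial := by
  have hset : {π : Equiv.Perm (Fin n) | AvoidsAdBC n π ∧ AvoidsAdCB n π ∧ 1 + des n π = n - k} =
      avoiders n k := by
    ext π
    rw [avoiders, Set.mem_ofPred_eq, Set.mem_ofPred_eq, ← and_assoc,
      avoidsAdBC_and_avoidsAdCB_iff]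
    exact and_congr_right fun _ => by omega
  obtain ⟨m, rfl⟩ : ∃ m, n = m + 1 := ⟨n - 1, by omega⟩
  rw [hset, two_pow_mul_ncard_avoiders]

/-- The `x^{n-k}` coefficient of the `n`-th Eulerian polynomial for
{(a-bc), (a-cb)}-avoiding permutations is `C(n,k)·C(n-k,k)·k!/2^k`. -/
theorem eulerian_poly_coeff (n k : ℕ) (hn : 1 ≤ n) (hk : k ≤ n) :
    2 ^ k * {π : Equiv.Perm (Fin n) |
        AvoidsAdBC n π ∧ AvoidsAdCB n π ∧ 1 + des n π = n - k}.ncard =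
      n.choose k * (n - k).choose k * k.factorial :=
  eulerian_poly_coeff_general n k hn
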